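/- arXiv:1908.06907 — 4 statements merged into one kernel-verified Lean document; each statement's English description precedes it below -/
import Mathlib

section
/- Let 0 < δ < 1 and 0 < α < β with α/β + α/2 ≤ 1/2. Then β·ln(2/δ) / (α(1+β)ln(1+β) + (β - α - αβ)·ln(1 - αβ/(β-α))) ≤ (β/((1+β)ln(1+β) - β)) · (ln(2/δ)/α). -/
/-! Both bounds have the numerator `β log (2/δ)`, so it suffices to show that the left denominator
is at least `α ((1 + β) log (1 + β) - β)`. With `c = β - α - αβ > 0`, the inequality
`log x ≥ 1 - 1/x` gives `c log (c / (β - α)) ≥ c - (β - α) = -αβ`, which is exactly that comparison;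
`(1 + β) log (1 + β) > β` keeps the right denominator positive. -/

open Real

lemma neg_le_sub_mul_log_one_sub_div {a b : ℝ} (hb : 0 < b) (hab : a < b) :
    -a ≤ (b - a) * log (1 - a / b) := by
  have hba : 0 < b - a := sub_pos.2 hab
  have hratio : 1 - a / b = (b - a) / b := by field_simp
  calc -a = (b - a) * (1 - ((b - a) / b)⁻¹) := by field_simp; ring
    _ ≤ (b - a) * log (1 - a / b) := by
      rw [hratio]
      exact mul_le_mul_of_nonneg_left (one_sub_inv_le_log_of_pos (div_pos hba hb)) hba.le

lemma lt_one_add_mul_log_one_add {x : ℝ} (hx : 0 < x) : x < (1 + x) * log (1 + x) :=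
  calc x ≤ (1 + x) * (2 * x / (x + 2)) := by
        rw [mul_div_assoc', le_div_iff₀ (by linarith)]
        nlinarith
    _ < (1 + x) * log (1 + x) := mul_lt_mul_of_pos_left (lt_log_one_add_of_pos hx) (by linarith)

theorem bound_comparison (δ α β : ℝ) (hδ0 : 0 < δ) (hδ1 : δ < 1)
    (hα : 0 < α) (hαβ : α < β) (hcond : α / β + α / 2 ≤ 1 / 2) :
    β * Real.log (2 / δ) /
      (α * (1 + β) * Real.log (1 + β) +
        (β - α - α * β) * Real.log (1 - α * β / (β - α)))
    ≤ (β / ((1 + β) * Real.log (1 + β) - β)) * (Real.log (2 / δ) / α) := by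
  have hβ : 0 < β := hα.trans hαβ
  have hβα : 0 < β - α := sub_pos.2 hαβ
  have hαβ_lt : α * β < β - α := by
    rw [div_add_div _ _ hβ.ne' two_ne_zero, div_le_div_iff₀ (by positivity) two_pos] at hcond
    nlinarith
  have hlog : 0 < log (2 / δ) := log_pos (by rw [lt_div_iff₀ hδ0]; linarith)
  have hD : 0 < (1 + β) * log (1 + β) - β := sub_pos.2 (lt_one_add_mul_log_one_add hβ)
  have hden : α * ((1 + β) * log (1 + β) - β) ≤
      α * (1 + β) * log (1 + β) + (β - α - α * β) * log (1 - α * β / (β - α)) := by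
    nlinarith [neg_le_sub_mul_log_one_sub_div hβα hαβ_lt]
  calc β * log (2 / δ) / (α * (1 + β) * log (1 + β) +
        (β - α - α * β) * log (1 - α * β / (β - α)))
      ≤ β * log (2 / δ) / (α * ((1 + β) * log (1 + β) - β)) :=
        div_le_div_of_nonneg_left (by positivity) (by positivity) hden
    _ = β / ((1 + β) * log (1 + β) - β) * (log (2 / δ) / α) := by field_simp
end

section
/- The function C(β) = β²/((1+β)·ln(1+β) - β) is strictly increasing on (0, ∞). -/
/-!
With `L = log (1 + β)` and `D = (1 + β) L - β` we have `D' = L`, so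
`C' = β ((β + 2) L - 2β) / D²`. Both the positivity of `D` and that of `C'` reduce to the
classical bound `2β / (β + 2) < log (1 + β)` for `β > 0`.
-/

open Real

lemma two_mul_lt_add_two_mul_log_one_add {x : ℝ} (hx : 0 < x) :
    2 * x < (x + 2) * log (1 + x) := by
  have h := lt_log_one_add_of_pos hx
  rwa [div_lt_iff₀' (by linarith)] at h

lemma hasDerivAt_one_add_mul_log_one_add_sub {x : ℝ} (hx : 1 + x ≠ 0) :
    HasDerivAt (fun β : ℝ => (1 + β) * log (1 + β) - β) (log (1 + x)) x := by
  have hlog : HasDerivAt (fun β : ℝ => log (1 + β)) (1 / (1 + x)) x := by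
    simpa using ((hasDerivAt_id x).const_add 1).log hx
  refine ((((hasDerivAt_id x).const_add 1).fun_mul hlog).fun_sub (hasDerivAt_id x)).congr_deriv ?_
  simp only [id, one_mul, mul_one_div_cancel hx, add_sub_cancel_right]

lemma hasDerivAt_sq_div_one_add_mul_log_one_add_sub {x : ℝ} (hx : 1 + x ≠ 0)
    (hD : (1 + x) * log (1 + x) - x ≠ 0) :
    HasDerivAt (fun β : ℝ => β ^ 2 / ((1 + β) * log (1 + β) - β))
      (x * ((x + 2) * log (1 + x) - 2 * x) / ((1 + x) * log (1 + x) - x) ^ 2) x := by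
  refine ((hasDerivAt_pow 2 x).fun_div (hasDerivAt_one_add_mul_log_one_add_sub hx) hD).congr_deriv
    ?_
  ring

theorem C_strict_mono :
    StrictMonoOn (fun β : ℝ => β ^ 2 / ((1 + β) * Real.log (1 + β) - β))
      (Set.Ioi (0 : ℝ)) := by
  have hC : ∀ x ∈ Set.Ioi (0 : ℝ), HasDerivAt
      (fun β : ℝ => β ^ 2 / ((1 + β) * Real.log (1 + β) - β))
      (x * ((x + 2) * log (1 + x) - 2 * x) / ((1 + x) * log (1 + x) - x) ^ 2) x :=
    fun x hx => hasDerivAt_sq_div_one_add_mul_log_one_add_sub (by linarith [hx.out])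
      (sub_ne_zero.2 (lt_one_add_mul_log_one_add hx).ne')
  refine strictMonoOn_of_deriv_pos (convex_Ioi 0)
    (fun x hx => (hC x hx).continuousAt.continuousWithinAt) fun x hx => ?_
  rw [interior_Ioi] at hx
  rw [(hC x hx).deriv]
  have hnum := sub_pos.2 (two_mul_lt_add_two_mul_log_one_add hx)
  have hD := sub_pos.2 (lt_one_add_mul_log_one_add hx)
  exact div_pos (mul_pos hx hnum) (pow_pos hD 2)
end

section
/- Let 0 < δ < 1 and 0 < α < β with α/β + α/2 ≤ 1/2. Let X₁, X₂, … be i.i.d. Bernoulli(p) with p ∈ (0,1), and p̂ₙ = (1/n)·Σᵢ₌₁ⁿ Xᵢ. If n > (β/((1+β)ln(1+β) - β))·ln(2/δ)/α, then Pr{|p̂ₙ - p| < α or |p̂ₙ - p|/p < β} > 1 - δ. -/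
/-!
If the mixed criterion fails, then `|∑ Xᵢ - n p| ≥ n p u` with `u = max (α / p) β`. Chernoff's
bound at the parameter `log (1 ± u)` bounds each tail by `exp (-n p h (1 + u))`, where
`h y = y log y + 1 - y` is `klFun`: for the lower tail because `h (1 - u) ≥ h (1 + u)`. Convexity
of `h` makes `h (1 + u) / u` increasing in `u`, so `n p h (1 + u) ≥ n α h (1 + β) / β`, which
exceeds `log (2 / δ)` by the choice of `n`.
-/

open MeasureTheory ProbabilityTheory Real InformationTheory Finset
open scoped Topology

lemma klFun_one_add_pos {x : ℝ} (hx : 0 < x) : 0 < klFun (1 + x) :=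
  (klFun_nonneg (by linarith)).lt_of_ne' fun h => by
    linarith [(klFun_eq_zero_iff (by linarith : (0:ℝ) ≤ 1 + x)).1 h]

lemma klFun_one_add_div_le_of_le {a b : ℝ} (ha : 0 < a) (hab : a ≤ b) :
    klFun (1 + a) / a ≤ klFun (1 + b) / b := by
  have h := convexOn_klFun.secant_mono (a := 1) (x := 1 + a) (y := 1 + b) (by simp)
    (by simp; linarith) (by simp; linarith) (by linarith) (by linarith) (by linarith)
  simpa [klFun_one] using h

lemma klFun_one_add_le_klFun_one_sub {u : ℝ} (hu0 : 0 ≤ u) (hu1 : u ≤ 1) :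
    klFun (1 + u) ≤ klFun (1 - u) := by
  have hmono : MonotoneOn (fun v => klFun (1 - v) - klFun (1 + v)) (Set.Icc 0 1) := by
    refine monotoneOn_of_hasDerivWithinAt_nonneg (f' := fun v => -log (1 - v) - log (1 + v))
      (convex_Icc 0 1) (by fun_prop) (fun v hv => ?_) (fun v hv => ?_)
    · rw [interior_Icc] at hv
      have h1 := (hasDerivAt_klFun (x := 1 - v) (by linarith [hv.2])).comp v
        ((hasDerivAt_id v).const_sub 1)
      have h2 := (hasDerivAt_klFun (x := 1 + v) (by linarith [hv.1])).comp v
        ((hasDerivAt_id v).const_add 1)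
      exact ((h1.sub h2).congr_deriv (by simp)).hasDerivWithinAt
    · rw [interior_Icc] at hv
      have : log (1 - v) + log (1 + v) ≤ 0 := by
        rw [← log_mul (by linarith [hv.2]) (by linarith [hv.1])]
        exact log_nonpos (by nlinarith [hv.1, hv.2]) (by nlinarith [sq_nonneg v])
      linarith
  have := hmono ⟨le_rfl, zero_le_one⟩ ⟨hu0, hu1⟩ hu0
  simp only [sub_zero, add_zero, sub_self] at this
  linarith

lemma lt_mul_mul_klFun_one_add_max {L p α β : ℝ} {n : ℕ} (hp : 0 < p) (hα : 0 < α) (hβ : 0 < β)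
    (hn : (n : ℝ) > β / klFun (1 + β) * (L / α)) :
    L < n * p * klFun (1 + max (α / p) β) := by
  have hK := klFun_one_add_pos hβ
  set u := max (α / p) β
  have hu : 0 < u := hβ.trans_le (le_max_right _ _)
  calc L = β / klFun (1 + β) * (L / α) * (α * (klFun (1 + β) / β)) := by field_simp
    _ < n * (α * (klFun (1 + β) / β)) := by gcongr
    _ ≤ n * (p * u * (klFun (1 + u) / u)) := by
      gcongr n * ?_
      exact mul_le_mul ((div_le_iff₀' hp).1 (le_max_left _ _))
        (klFun_one_add_div_le_of_le hβ (le_max_right _ _)) (by positivity) (by positivity)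
    _ = n * p * klFun (1 + u) := by field_simp

lemma mul_mul_max_le_abs_sub {a n p α β : ℝ} (hn : 0 < n) (hp : 0 < p)
    (hα : α ≤ |a / n - p|) (hβ : β ≤ |a / n - p| / p) :
    n * p * max (α / p) β ≤ |a - n * p| := by
  have hpu : p * max (α / p) β ≤ |a / n - p| :=
    (le_div_iff₀' hp).1 (max_le (div_le_div_of_nonneg_right hα hp.le) hβ)
  calc n * p * max (α / p) β ≤ n * |a / n - p| := by rw [mul_assoc]; gcongr
    _ = |a - n * p| := by rw [← abs_of_pos hn, ← abs_mul, abs_of_pos hn]; congr 1; field_simp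

/-- The Chernoff bound for a sum of Bernoulli variables at the parameter `log y`. -/
lemma exp_neg_log_mul_mul_one_add_pow_le {p y : ℝ} (hp0 : 0 ≤ p) (hp1 : p ≤ 1) (hy : 0 < y)
    (n : ℕ) :
    exp (-log y * (n * p * y)) * (1 + p * (exp (log y) - 1)) ^ n ≤ exp (-(n * p * klFun y)) := by
  rw [exp_log hy]
  calc _ ≤ exp (-log y * (n * p * y)) * exp (p * (y - 1)) ^ n := by
        gcongr
        · nlinarith
        · linarith [add_one_le_exp (p * (y - 1))]
    _ = _ := by rw [← exp_nat_mul, ← exp_add, klFun_apply]; ring_nf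

section Bernoulli

variable {Ω : Type*} [MeasurableSpace Ω] {μ : Measure Ω}

structure IsBernoulli (μ : Measure Ω) (Y : Ω → ℝ) (p : ℝ) : Prop where
  measurable : Measurable Y
  measure_eq_one : μ {ω | Y ω = 1} = ENNReal.ofReal p
  measure_eq_zero : μ {ω | Y ω = 0} = ENNReal.ofReal (1 - p)

namespace IsBernoulli

variable [IsProbabilityMeasure μ] {Y : Ω → ℝ} {p : ℝ}

lemma nonneg (hY : IsBernoulli μ Y p) : 0 ≤ p := by
  have h := hY.measure_eq_zero ▸ prob_le_one (μ := μ) (s := {ω | Y ω = 0})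
  rw [ENNReal.ofReal_le_one] at h
  linarith

lemma le_one (hY : IsBernoulli μ Y p) : p ≤ 1 := by
  have h := hY.measure_eq_one ▸ prob_le_one (μ := μ) (s := {ω | Y ω = 1})
  rwa [ENNReal.ofReal_le_one] at h

lemma ae_eq_zero_or_eq_one (hY : IsBernoulli μ Y p) : ∀ᵐ ω ∂μ, Y ω = 0 ∨ Y ω = 1 := by
  have h0 : MeasurableSet {ω | Y ω = 0} := hY.measurable (measurableSet_singleton 0)
  have h1 : MeasurableSet {ω | Y ω = 1} := hY.measurable (measurableSet_singleton 1)
  have hdisj : Disjoint {ω | Y ω = 0} {ω | Y ω = 1} :=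
    Set.disjoint_left.2 fun ω h0 h1 => by simp_all
  refine (ae_iff_measure_eq ?_).2 ?_
  · rw [Set.ofPred_or]; exact (h0.union h1).nullMeasurableSet
  rw [Set.ofPred_or, measure_union hdisj h1, hY.measure_eq_zero, hY.measure_eq_one,
    ← ENNReal.ofReal_add (by linarith [hY.le_one]) hY.nonneg, measure_univ]
  norm_num

lemma ae_nonneg (hY : IsBernoulli μ Y p) : ∀ᵐ ω ∂μ, 0 ≤ Y ω := by
  filter_upwards [hY.ae_eq_zero_or_eq_one] with ω h
  rcases h with h | h <;> simp [h]

lemma exp_mul_ae_eq (hY : IsBernoulli μ Y p) (t : ℝ) :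
    (fun ω => exp (t * Y ω)) =ᵐ[μ] fun ω => 1 + (exp t - 1) * {ω | Y ω = 1}.indicator 1 ω := by
  filter_upwards [hY.ae_eq_zero_or_eq_one] with ω h
  rcases h with h | h <;> simp [h]

lemma integrable_exp_mul (hY : IsBernoulli μ Y p) (t : ℝ) :
    Integrable (fun ω => exp (t * Y ω)) μ :=
  ((integrable_const 1).add (((integrable_const 1).indicator
    (hY.measurable (measurableSet_singleton 1))).const_mul _)).congr (hY.exp_mul_ae_eq t).symm

lemma mgf_eq (hY : IsBernoulli μ Y p) (t : ℝ) : mgf Y μ t = 1 + p * (exp t - 1) := by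
  have h1 : MeasurableSet {ω | Y ω = 1} := hY.measurable (measurableSet_singleton 1)
  rw [mgf, integral_congr_ae (hY.exp_mul_ae_eq t), integral_add (integrable_const _)
    (((integrable_const 1).indicator h1).const_mul _), integral_const_mul,
    integral_indicator_one h1, measureReal_def, hY.measure_eq_one, ENNReal.toReal_ofReal hY.nonneg]
  simp only [integral_const, probReal_univ, smul_eq_mul, one_mul]
  ring

end IsBernoulli

variable [IsProbabilityMeasure μ] {ι : Type*} {X : ι → Ω → ℝ} {p : ℝ}

lemma mgf_sum_of_isBernoulli (hX : ∀ i, IsBernoulli μ (X i) p) (hindep : iIndepFun X μ)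
    (s : Finset ι) (t : ℝ) : mgf (∑ i ∈ s, X i) μ t = (1 + p * (exp t - 1)) ^ #s := by
  rw [hindep.mgf_sum (fun i => (hX i).measurable), prod_congr rfl fun i _ => (hX i).mgf_eq t,
    prod_const]

lemma measureReal_sum_ge_le_exp_klFun (hX : ∀ i, IsBernoulli μ (X i) p)
    (hindep : iIndepFun X μ) (s : Finset ι) {y : ℝ} (hy : 1 ≤ y) :
    μ.real {ω | #s * p * y ≤ ∑ i ∈ s, X i ω} ≤ exp (-(#s * p * klFun y)) := by
  obtain rfl | ⟨i, -⟩ := s.eq_empty_or_nonempty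
  · simp
  have h := measure_ge_le_exp_mul_mgf (#s * p * y) (log_nonneg hy)
    (hindep.integrable_exp_mul_sum (s := s) (fun i => (hX i).measurable)
      (fun i _ => (hX i).integrable_exp_mul (log y)))
  rw [mgf_sum_of_isBernoulli hX hindep] at h
  simp only [Finset.sum_apply] at h
  exact h.trans (exp_neg_log_mul_mul_one_add_pow_le (hX i).nonneg (hX i).le_one (by linarith) _)

lemma measureReal_sum_le_le_exp_klFun_of_pos (hX : ∀ i, IsBernoulli μ (X i) p)
    (hindep : iIndepFun X μ) (s : Finset ι) {y : ℝ} (hy0 : 0 < y) (hy1 : y ≤ 1) :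
    μ.real {ω | ∑ i ∈ s, X i ω ≤ #s * p * y} ≤ exp (-(#s * p * klFun y)) := by
  obtain rfl | ⟨i, -⟩ := s.eq_empty_or_nonempty
  · simp
  have h := measure_le_le_exp_mul_mgf (#s * p * y) (log_nonpos hy0.le hy1)
    (hindep.integrable_exp_mul_sum (s := s) (fun i => (hX i).measurable)
      (fun i _ => (hX i).integrable_exp_mul (log y)))
  rw [mgf_sum_of_isBernoulli hX hindep] at h
  simp only [Finset.sum_apply] at h
  exact h.trans (exp_neg_log_mul_mul_one_add_pow_le (hX i).nonneg (hX i).le_one hy0 _)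

/-- At `y = 0` the Chernoff parameter `log y` degenerates; pass to the limit `y → 0⁺` instead. -/
lemma measureReal_sum_le_le_exp_klFun (hX : ∀ i, IsBernoulli μ (X i) p)
    (hindep : iIndepFun X μ) (s : Finset ι) {y : ℝ} (hy0 : 0 ≤ y) (hy1 : y ≤ 1) :
    μ.real {ω | ∑ i ∈ s, X i ω ≤ #s * p * y} ≤ exp (-(#s * p * klFun y)) := by
  obtain rfl | ⟨i, -⟩ := s.eq_empty_or_nonempty
  · simp
  obtain hy0 | rfl := hy0.lt_or_eq
  · exact measureReal_sum_le_le_exp_klFun_of_pos hX hindep s hy0 hy1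
  have hlim : Filter.Tendsto (fun y => exp (-(#s * p * klFun y))) (𝓝[>] 0)
      (𝓝 (exp (-(#s * p * klFun 0)))) :=
    ((by fun_prop : Continuous fun y => exp (-(#s * p * klFun y))).tendsto 0).mono_left
      nhdsWithin_le_nhds
  refine ge_of_tendsto hlim ?_
  filter_upwards [Ioo_mem_nhdsGT zero_lt_one] with y hy
  refine (measureReal_mono fun ω hω => ?_).trans
    (measureReal_sum_le_le_exp_klFun_of_pos hX hindep s hy.1 hy.2.le)
  simp only [Set.mem_ofPred_eq, mul_zero] at hω ⊢
  exact hω.trans (mul_nonneg (mul_nonneg (Nat.cast_nonneg _) (hX i).nonneg) hy.1.le)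

lemma measureReal_sum_le_le_exp_klFun_one_add (hX : ∀ i, IsBernoulli μ (X i) p)
    (hindep : iIndepFun X μ) (s : Finset ι) {u : ℝ} (hu : 0 ≤ u) :
    μ.real {ω | ∑ i ∈ s, X i ω ≤ #s * p * (1 - u)} ≤ exp (-(#s * p * klFun (1 + u))) := by
  obtain hnp | hnp := le_or_gt ((#s : ℝ) * p) 0
  · exact measureReal_le_one.trans
      (one_le_exp (by nlinarith [klFun_nonneg (by linarith : (0:ℝ) ≤ 1 + u)]))
  obtain hu1 | hu1 := le_or_gt u 1
  · refine (measureReal_sum_le_le_exp_klFun hX hindep s (by linarith) (by linarith)).trans ?_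
    gcongr
    exact klFun_one_add_le_klFun_one_sub hu hu1
  have hnull : μ {ω | ∑ i ∈ s, X i ω ≤ #s * p * (1 - u)} = 0 := by
    refine measure_eq_zero_iff_ae_notMem.2 ?_
    filter_upwards [(Filter.eventually_all_finset s).2 fun i _ => (hX i).ae_nonneg] with ω hω hle
    have := sum_nonneg hω
    nlinarith [show ∑ i ∈ s, X i ω ≤ #s * p * (1 - u) from hle]
  rw [measureReal_def, hnull, ENNReal.toReal_zero]
  positivity

lemma measureReal_abs_sum_sub_ge_le (hX : ∀ i, IsBernoulli μ (X i) p)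
    (hindep : iIndepFun X μ) (s : Finset ι) {u : ℝ} (hu : 0 ≤ u) :
    μ.real {ω | #s * p * u ≤ |∑ i ∈ s, X i ω - #s * p|} ≤ 2 * exp (-(#s * p * klFun (1 + u))) :=
  calc _ ≤ μ.real ({ω | #s * p * (1 + u) ≤ ∑ i ∈ s, X i ω} ∪
          {ω | ∑ i ∈ s, X i ω ≤ #s * p * (1 - u)}) := by
        refine measureReal_mono fun ω hω => ?_
        simp only [Set.mem_ofPred_eq, Set.mem_union, le_abs] at hω ⊢
        rcases hω with h | h
        · left; linarith
        · right; linarith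
    _ ≤ _ := measureReal_union_le _ _
    _ ≤ _ := by
        linarith [measureReal_sum_ge_le_exp_klFun hX hindep s (by linarith : 1 ≤ 1 + u),
          measureReal_sum_le_le_exp_klFun_one_add hX hindep s hu]

end Bernoulli

theorem mixed_criterion_fixed_size'_general {Ω : Type*} [MeasurableSpace Ω]
    (μ : Measure Ω) [IsProbabilityMeasure μ]
    (X : ℕ → Ω → ℝ) (p : ℝ) (hp0 : 0 < p)
    (hmeas : ∀ i, Measurable (X i))
    (hindep : iIndepFun X μ)
    (hone : ∀ i, μ {ω | X i ω = 1} = ENNReal.ofReal p)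
    (hzero : ∀ i, μ {ω | X i ω = 0} = ENNReal.ofReal (1 - p))
    (δ α β : ℝ) (hδ0 : 0 < δ) (hδ1 : δ < 1)
    (hα : 0 < α) (hαβ : α < β)
    (n : ℕ)
    (hn : (n : ℝ) > (β / ((1 + β) * Real.log (1 + β) - β)) * (Real.log (2 / δ) / α)) :
    (μ {ω | |(∑ i ∈ Finset.range n, X i ω) / n - p| < α ∨
            |(∑ i ∈ Finset.range n, X i ω) / n - p| / p < β}).toReal > 1 - δ := by
  have hβ : 0 < β := hα.trans hαβ
  have hX : ∀ i, IsBernoulli μ (X i) p := fun i => ⟨hmeas i, hone i, hzero i⟩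
  rw [show (1 + β) * log (1 + β) - β = klFun (1 + β) by rw [klFun_apply]; ring] at hn
  have hL : 0 < log (2 / δ) := log_pos (by rw [lt_div_iff₀ hδ0]; linarith)
  have hn0 : (0:ℝ) < n := lt_trans (by have := klFun_one_add_pos hβ; positivity) hn
  set u := max (α / p) β
  have hu : 0 < u := hβ.trans_le (le_max_right _ _)
  set G := {ω | |(∑ i ∈ Finset.range n, X i ω) / n - p| < α ∨
            |(∑ i ∈ Finset.range n, X i ω) / n - p| / p < β}
  have hGc : Gᶜ ⊆ {ω | #(range n) * p * u ≤ |∑ i ∈ range n, X i ω - #(range n) * p|} := by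
    intro ω hω
    simp only [G, Set.mem_compl_iff, Set.mem_ofPred_eq, not_or, not_lt, card_range] at hω ⊢
    exact mul_mul_max_le_abs_sub hn0 hp0 hω.1 hω.2
  have hdev := measureReal_abs_sum_sub_ge_le hX hindep (range n) hu.le
  rw [card_range] at hGc hdev
  have hcover : 1 ≤ μ.real G + μ.real Gᶜ := by
    simpa using measureReal_union_le (μ := μ) G Gᶜ
  have hexp : 2 * exp (-log (2 / δ)) = δ := by
    rw [exp_neg, exp_log (by positivity)]; field_simp
  rw [gt_iff_lt, ← measureReal_def]
  linarith [measureReal_mono (μ := μ) hGc,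
    exp_lt_exp.2 (neg_lt_neg (lt_mul_mul_klFun_one_add_max hp0 hα hβ hn))]

theorem mixed_criterion_fixed_size' {Ω : Type*} [MeasurableSpace Ω]
    (μ : Measure Ω) [IsProbabilityMeasure μ]
    (X : ℕ → Ω → ℝ) (p : ℝ) (hp0 : 0 < p) (hp1 : p < 1)
    (hmeas : ∀ i, Measurable (X i))
    (hindep : iIndepFun X μ)
    (hone : ∀ i, μ {ω | X i ω = 1} = ENNReal.ofReal p)
    (hzero : ∀ i, μ {ω | X i ω = 0} = ENNReal.ofReal (1 - p))
    (δ α β : ℝ) (hδ0 : 0 < δ) (hδ1 : δ < 1)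
    (hα : 0 < α) (hαβ : α < β)
    (hcond : α / β + α / 2 ≤ 1 / 2)
    (n : ℕ)
    (hn : (n : ℝ) > (β / ((1 + β) * Real.log (1 + β) - β)) * (Real.log (2 / δ) / α)) :
    (μ {ω | |(∑ i ∈ Finset.range n, X i ω) / n - p| < α ∨
            |(∑ i ∈ Finset.range n, X i ω) / n - p| / p < β}).toReal > 1 - δ :=
  mixed_criterion_fixed_size'_general μ X p hp0 hmeas hindep hone hzero δ α β hδ0 hδ1 hα hαβ n hn
end

section
/- Let 0 < δ < 1 and β > 0. Let X₁, X₂, … be i.i.d. Bernoulli(p) with p ∈ (0,1). Define the stopping time N = min{n ∈ ℕ : Σᵢ₌₁ⁿ Xᵢ > (1+β)·ln(2/δ)/((1+β)ln(1+β) - β)} and the estimator p̃ = (1/N)·Σᵢ₌₁ᴺ Xᵢ. Then Pr{|p̃ - p|/p < β} ≥ 1 - δ. -/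
/-!
Because the `Xᵢ` are `0/1`-valued, the partial sums `Sₙ` are integers climbing in unit steps, so
at the first time `N` at which `Sₙ` exceeds the threshold `c` we have `S_N = s := ⌊c⌋₊ + 1` and
the estimator is `s / N`. Its relative error can reach `β` only if `N ≤ s / ((1 + β) p)` or
`N ≥ s / ((1 - β) p)`, and `N` is controlled by sums at fixed times: `N ≤ n ↔ s ≤ Sₙ`. Both
events are therefore binomial tail events, and Chernoff's bound with `eᵗ = 1 ± β` bounds each by
`exp (-s h(β) / (1 + β))`, where `h(β) = (1 + β) log (1 + β) - β`; for the lower tail this needs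
`log ((1 + β) / (1 - β)) ≤ 2β / (1 - β²)`. The threshold `c` is exactly the one making
`exp (-c h(β) / (1 + β)) = δ / 2`.
-/

open MeasureTheory ProbabilityTheory Real Finset

noncomputable def chernoffRate (β : ℝ) : ℝ := (1 + β) * log (1 + β) - β

lemma chernoffRate_pos {β : ℝ} (hβ : 0 < β) : 0 < chernoffRate β := by
  have h1β : 0 < 1 + β := by linarith
  have h := log_lt_sub_one_of_pos (inv_pos.2 h1β) (inv_ne_one.2 (by linarith))
  rw [log_inv, inv_eq_one_div, div_sub_one h1β.ne', neg_lt, ← neg_div, neg_sub,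
    add_sub_cancel_left, div_lt_iff₀ h1β] at h
  unfold chernoffRate
  linarith

lemma log_one_add_sub_log_one_sub_le {β : ℝ} (hβ0 : 0 ≤ β) (hβ1 : β < 1) :
    log (1 + β) - log (1 - β) ≤ β / (1 - β) + β / (1 + β) := by
  have h1 : 1 - β ≠ 0 := by linarith
  have h2 : 1 + β ≠ 0 := by linarith
  have hx : 0 < (1 + β) / (1 - β) := by apply div_pos <;> linarith
  have hsinh : sinh (log ((1 + β) / (1 - β))) = β / (1 - β) + β / (1 + β) := by
    rw [sinh_eq, exp_neg, exp_log hx, inv_div]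
    field_simp
    ring
  rw [← log_div (by linarith) (by linarith), ← hsinh]
  exact self_le_sinh_iff.2 (log_nonneg ((one_le_div (by linarith)).2 (by linarith)))

lemma le_floor_or_ceil_le_of_le_abs_sub {s p β : ℝ} {n : ℕ} (hs : 0 < s) (hp : 0 < p)
    (hβ : 0 ≤ β) (hn : 0 < n) (h : β * p ≤ |s / n - p|) :
    n ≤ ⌊s / ((1 + β) * p)⌋₊ ∨ (β < 1 ∧ ⌈s / ((1 - β) * p)⌉₊ ≤ n) := by
  have hn' : (0 : ℝ) < n := Nat.cast_pos.2 hn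
  rcases le_abs'.1 h with hlow | hhigh
  · have hsn : 0 < s / n := div_pos hs hn'
    have hβ1 : β < 1 := by nlinarith
    refine Or.inr ⟨hβ1, Nat.ceil_le.2 ?_⟩
    have : s / n ≤ (1 - β) * p := by linarith
    rw [div_le_iff₀ hn'] at this
    rwa [div_le_iff₀ (by nlinarith), mul_comm]
  · refine Or.inl (Nat.le_floor ?_)
    have : (1 + β) * p ≤ s / n := by linarith
    rw [le_div_iff₀ hn'] at this
    rwa [le_div_iff₀ (by positivity), mul_comm]

lemma one_sub_measureReal_le_measureReal_setOf_lt {Ω : Type*} [MeasurableSpace Ω]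
    {μ : Measure Ω} [IsProbabilityMeasure μ] (f : Ω → ℝ) (b : ℝ) :
    1 - μ.real {ω | b ≤ f ω} ≤ μ.real {ω | f ω < b} := by
  have hcover : Set.univ ⊆ {ω | f ω < b} ∪ {ω | b ≤ f ω} := fun ω _ => lt_or_ge (f ω) b
  linarith [probReal_univ (μ := μ),
    (measureReal_mono (μ := μ) hcover).trans (measureReal_union_le _ _)]

section Bernoulli

variable {Ω : Type*} [MeasurableSpace Ω] {μ : Measure Ω} {Y : Ω → ℝ} {p : ℝ}

lemma ae_eq_zero_or_eq_one_of_bernoulli [IsProbabilityMeasure μ] (hp0 : 0 ≤ p) (hp1 : p ≤ 1)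
    (hY : Measurable Y) (hone : μ {ω | Y ω = 1} = ENNReal.ofReal p)
    (hzero : μ {ω | Y ω = 0} = ENNReal.ofReal (1 - p)) :
    ∀ᵐ ω ∂μ, Y ω = 0 ∨ Y ω = 1 := by
  have hmeas (a : ℝ) : MeasurableSet {ω | Y ω = a} := hY (measurableSet_singleton a)
  have hunion : μ ({ω | Y ω = 0} ∪ {ω | Y ω = 1}) = 1 := by
    rw [measure_union _ (hmeas 1), hzero, hone, ← ENNReal.ofReal_add (by linarith) hp0,
      sub_add_cancel, ENNReal.ofReal_one]
    exact Set.disjoint_left.2 fun ω h0 h1 => by simp_all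
  exact (prob_compl_eq_zero_iff ((hmeas 0).union (hmeas 1))).2 hunion

lemma exp_mul_ae_eq_of_bernoulli (h01 : ∀ᵐ ω ∂μ, Y ω = 0 ∨ Y ω = 1) (t : ℝ) :
    (fun ω => exp (t * Y ω)) =ᵐ[μ]
      fun ω => 1 + {ω | Y ω = 1}.indicator (fun _ => exp t - 1) ω := by
  filter_upwards [h01] with ω h
  rcases h with h | h <;> simp [h]

lemma integrable_exp_mul_of_bernoulli [IsFiniteMeasure μ] (hY : Measurable Y)
    (h01 : ∀ᵐ ω ∂μ, Y ω = 0 ∨ Y ω = 1) (t : ℝ) : Integrable (fun ω => exp (t * Y ω)) μ :=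
  ((integrable_const 1).add ((integrable_const _).indicator
    (hY (measurableSet_singleton 1)))).congr (exp_mul_ae_eq_of_bernoulli h01 t).symm

lemma mgf_of_bernoulli [IsProbabilityMeasure μ] (hp0 : 0 ≤ p) (hY : Measurable Y)
    (h01 : ∀ᵐ ω ∂μ, Y ω = 0 ∨ Y ω = 1) (hone : μ {ω | Y ω = 1} = ENNReal.ofReal p) (t : ℝ) :
    mgf Y μ t = 1 + p * (exp t - 1) := by
  have hmeas : MeasurableSet {ω | Y ω = 1} := hY (measurableSet_singleton 1)
  rw [mgf, integral_congr_ae (exp_mul_ae_eq_of_bernoulli h01 t),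
    integral_add (integrable_const 1) ((integrable_const _).indicator hmeas),
    integral_indicator_const _ hmeas, measureReal_def, hone, ENNReal.toReal_ofReal hp0]
  simp

end Bernoulli

structure IsBernoulliProcess {Ω : Type*} [MeasurableSpace Ω] (μ : Measure Ω)
    (X : ℕ → Ω → ℝ) (p : ℝ) : Prop where
  nonneg : 0 ≤ p
  le_one : p ≤ 1
  measurable : ∀ i, Measurable (X i)
  indep : iIndepFun X μ
  measure_eq_one : ∀ i, μ {ω | X i ω = 1} = ENNReal.ofReal p
  measure_eq_zero : ∀ i, μ {ω | X i ω = 0} = ENNReal.ofReal (1 - p)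

namespace IsBernoulliProcess

variable {Ω : Type*} [MeasurableSpace Ω] {μ : Measure Ω} [IsProbabilityMeasure μ]
  {X : ℕ → Ω → ℝ} {p : ℝ}

lemma ae_eq_zero_or_eq_one (hX : IsBernoulliProcess μ X p) :
    ∀ᵐ ω ∂μ, ∀ i, X i ω = 0 ∨ X i ω = 1 :=
  ae_all_iff.2 fun i => ae_eq_zero_or_eq_one_of_bernoulli hX.nonneg hX.le_one
    (hX.measurable i) (hX.measure_eq_one i) (hX.measure_eq_zero i)

lemma integrable_exp_mul_sum (hX : IsBernoulliProcess μ X p) (n : ℕ) (t : ℝ) :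
    Integrable (fun ω => exp (t * ∑ i ∈ range n, X i ω)) μ := by
  simpa only [Finset.sum_apply] using hX.indep.integrable_exp_mul_sum hX.measurable
    fun i _ => integrable_exp_mul_of_bernoulli (hX.measurable i)
      (ae_all_iff.1 hX.ae_eq_zero_or_eq_one i) t

lemma mgf_sum (hX : IsBernoulliProcess μ X p) (n : ℕ) (t : ℝ) :
    mgf (fun ω => ∑ i ∈ range n, X i ω) μ t = (1 + p * (exp t - 1)) ^ n := by
  rw [← Finset.sum_fn, hX.indep.mgf_sum hX.measurable, prod_congr rfl fun i _ =>
    mgf_of_bernoulli hX.nonneg (hX.measurable i) (ae_all_iff.1 hX.ae_eq_zero_or_eq_one i)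
      (hX.measure_eq_one i) t, prod_const, card_range]

lemma mgf_sum_le (hX : IsBernoulliProcess μ X p) (n : ℕ) (t : ℝ) :
    mgf (fun ω => ∑ i ∈ range n, X i ω) μ t ≤ exp (p * (exp t - 1) * n) := by
  rw [hX.mgf_sum, mul_comm (p * _) (n : ℝ), exp_nat_mul]
  have : 0 ≤ 1 + p * (exp t - 1) := by nlinarith [exp_pos t, hX.nonneg, hX.le_one]
  gcongr
  linarith [add_one_le_exp (p * (exp t - 1))]

lemma measureReal_le_sum_le (hX : IsBernoulliProcess μ X p) (n : ℕ) (a : ℝ) {t : ℝ}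
    (ht : 0 ≤ t) :
    μ.real {ω | a ≤ ∑ i ∈ range n, X i ω} ≤ exp (-t * a + p * (exp t - 1) * n) := by
  rw [exp_add]
  exact (measure_ge_le_exp_mul_mgf a ht (hX.integrable_exp_mul_sum n t)).trans
    (by gcongr; exact hX.mgf_sum_le n t)

lemma measureReal_sum_le_le (hX : IsBernoulliProcess μ X p) (n : ℕ) (a : ℝ) {t : ℝ}
    (ht : t ≤ 0) :
    μ.real {ω | ∑ i ∈ range n, X i ω ≤ a} ≤ exp (-t * a + p * (exp t - 1) * n) := by
  rw [exp_add]
  exact (measure_le_le_exp_mul_mgf a ht (hX.integrable_exp_mul_sum n t)).trans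
    (by gcongr; exact hX.mgf_sum_le n t)

lemma measureReal_le_sum_le_exp_chernoffRate (hX : IsBernoulliProcess μ X p) {n : ℕ}
    {a β : ℝ} (hβ : 0 ≤ β) (hn : (1 + β) * p * n ≤ a) :
    μ.real {ω | a ≤ ∑ i ∈ range n, X i ω} ≤ exp (-(a * chernoffRate β / (1 + β))) := by
  have h1β : 0 < 1 + β := by linarith
  refine (hX.measureReal_le_sum_le n a (log_nonneg (by linarith : 1 ≤ 1 + β))).trans
    (exp_le_exp.2 ?_)
  rw [exp_log h1β, add_sub_cancel_left]
  have : β * p * n ≤ β * a / (1 + β) := by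
    rw [le_div_iff₀ h1β]
    nlinarith
  have : -(a * chernoffRate β / (1 + β)) = -log (1 + β) * a + β * a / (1 + β) := by
    unfold chernoffRate
    field_simp
    ring
  linarith

lemma measureReal_sum_le_sub_one_le_exp_chernoffRate (hX : IsBernoulliProcess μ X p) {n : ℕ}
    {a β : ℝ} (hβ0 : 0 ≤ β) (hβ1 : β < 1) (ha : 0 ≤ a) (hn : a ≤ (1 - β) * p * (n + 1)) :
    μ.real {ω | ∑ i ∈ range n, X i ω ≤ a - 1} ≤ exp (-(a * chernoffRate β / (1 + β))) := by
  have h1β : 0 < 1 - β := by linarith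
  refine (hX.measureReal_sum_le_le n (a - 1) (log_nonpos h1β.le (by linarith))).trans
    (exp_le_exp.2 ?_)
  rw [exp_log h1β, sub_sub_cancel_left]
  have hlog : log (1 - β) ≤ -β := by linarith [log_le_sub_one_of_pos h1β]
  have hkey := mul_le_mul_of_nonneg_left (log_one_add_sub_log_one_sub_le hβ0 hβ1) ha
  have hβp : β * p ≤ β := mul_le_of_le_one_right hβ0 hX.le_one
  have : a * (β / (1 - β)) ≤ β * p * (n + 1) := by
    rw [← mul_div_assoc, div_le_iff₀ h1β]
    nlinarith
  have : -(a * chernoffRate β / (1 + β)) = a * (-log (1 + β) + β / (1 + β)) := by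
    unfold chernoffRate
    field_simp
    ring
  linarith

lemma ae_exists_lt_sum (hX : IsBernoulliProcess μ X p) (hp : 0 < p) (c : ℝ) :
    ∀ᵐ ω ∂μ, ∃ n, c < ∑ i ∈ range n, X i ω := by
  have hbound (n : ℕ) :
      μ.real {ω | ∀ n, ∑ i ∈ range n, X i ω ≤ c} ≤ exp (c + p * (exp (-1) - 1) * n) := by
    have hsub : {ω | ∀ n, ∑ i ∈ range n, X i ω ≤ c} ⊆ {ω | ∑ i ∈ range n, X i ω ≤ c} :=
      fun ω h => h n
    simpa using (measureReal_mono hsub).trans (hX.measureReal_sum_le_le n c (t := -1) (by norm_num))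
  have hdecay : Filter.Tendsto (fun n : ℕ => exp (c + p * (exp (-1) - 1) * n))
      Filter.atTop (nhds 0) :=
    tendsto_exp_atBot.comp (Filter.tendsto_atBot_add_const_left _ c
      (tendsto_natCast_atTop_atTop.const_mul_atTop_of_neg
        (mul_neg_of_pos_of_neg hp (by linarith [exp_lt_one_iff.2 (by norm_num : (-1 : ℝ) < 0)]))))
  rw [ae_iff]
  simp only [not_exists, not_lt]
  exact (measureReal_eq_zero_iff).1
    (le_antisymm (ge_of_tendsto' hdecay hbound) measureReal_nonneg)

end IsBernoulliProcess

noncomputable def firstPassage (x : ℕ → ℝ) (c : ℝ) : ℕ :=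
  sInf {n : ℕ | 0 < n ∧ (∑ i ∈ range n, x i) > c}

section FirstPassage

variable {x : ℕ → ℝ} {c : ℝ}

lemma exists_sum_range_eq_natCast (hx : ∀ i, x i = 0 ∨ x i = 1) (n : ℕ) :
    ∃ k : ℕ, ∑ i ∈ range n, x i = k := by
  induction n with
  | zero => exact ⟨0, by simp⟩
  | succ n ih =>
    obtain ⟨k, hk⟩ := ih
    rcases hx n with h | h
    · exact ⟨k, by simp [sum_range_succ, hk, h]⟩
    · exact ⟨k + 1, by simp [sum_range_succ, hk, h]⟩

lemma monotone_sum_range (hx : ∀ i, x i = 0 ∨ x i = 1) :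
    Monotone fun n => ∑ i ∈ range n, x i :=
  fun _ _ hmn => sum_le_sum_of_subset_of_nonneg (range_subset_range.2 hmn)
    fun i _ _ => by rcases hx i with h | h <;> simp [h]

lemma lt_sum_range_iff_floor_add_one_le (hx : ∀ i, x i = 0 ∨ x i = 1) (hc : 0 ≤ c) (n : ℕ) :
    c < ∑ i ∈ range n, x i ↔ (⌊c⌋₊ : ℝ) + 1 ≤ ∑ i ∈ range n, x i := by
  obtain ⟨k, hk⟩ := exists_sum_range_eq_natCast hx n
  rw [hk, ← Nat.floor_lt hc]
  norm_cast

lemma firstPassage_le_iff (hx : ∀ i, x i = 0 ∨ x i = 1) (hc : 0 ≤ c)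
    (hreach : ∃ n, c < ∑ i ∈ range n, x i) (n : ℕ) :
    firstPassage x c ≤ n ↔ c < ∑ i ∈ range n, x i := by
  have hset : {n : ℕ | 0 < n ∧ (∑ i ∈ range n, x i) > c} = {n | c < ∑ i ∈ range n, x i} := by
    ext n
    refine ⟨And.right, fun h => ⟨Nat.pos_of_ne_zero ?_, h⟩⟩
    rintro rfl
    simp at h
    linarith
  rw [firstPassage, hset]
  refine ⟨fun h => ?_, fun h => Nat.sInf_le h⟩
  have hmem : c < ∑ i ∈ range (sInf {n | c < ∑ i ∈ range n, x i}), x i := Nat.sInf_mem hreach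
  exact hmem.trans_le (monotone_sum_range hx h)

lemma firstPassage_pos (hx : ∀ i, x i = 0 ∨ x i = 1) (hc : 0 ≤ c)
    (hreach : ∃ n, c < ∑ i ∈ range n, x i) : 0 < firstPassage x c := by
  by_contra! h
  have := (firstPassage_le_iff hx hc hreach 0).1 h
  simp only [range_zero, sum_empty] at this
  linarith

lemma sum_range_le_floor_of_lt_firstPassage (hx : ∀ i, x i = 0 ∨ x i = 1) (hc : 0 ≤ c)
    (hreach : ∃ n, c < ∑ i ∈ range n, x i) {n : ℕ} (hn : n < firstPassage x c) :
    ∑ i ∈ range n, x i ≤ ⌊c⌋₊ := by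
  obtain ⟨k, hk⟩ := exists_sum_range_eq_natCast hx n
  have hkc : (k : ℝ) ≤ c :=
    hk ▸ not_lt.1 fun h => hn.not_ge ((firstPassage_le_iff hx hc hreach n).2 h)
  rw [hk]
  exact_mod_cast Nat.le_floor hkc

lemma sum_range_firstPassage (hx : ∀ i, x i = 0 ∨ x i = 1) (hc : 0 ≤ c)
    (hreach : ∃ n, c < ∑ i ∈ range n, x i) :
    ∑ i ∈ range (firstPassage x c), x i = ⌊c⌋₊ + 1 := by
  obtain ⟨m, hm⟩ := Nat.exists_eq_add_one.2 (firstPassage_pos hx hc hreach)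
  have hprev := sum_range_le_floor_of_lt_firstPassage hx hc hreach (by omega : m < firstPassage x c)
  have hlast : x m ≤ 1 := by rcases hx m with h | h <;> simp [h]
  refine le_antisymm ?_ ((lt_sum_range_iff_floor_add_one_le hx hc _).1
    ((firstPassage_le_iff hx hc hreach _).1 le_rfl))
  rw [hm, sum_range_succ]
  linarith

end FirstPassage

theorem IsBernoulliProcess.measureReal_le_relError_firstPassage_le {Ω : Type*}
    [MeasurableSpace Ω] {μ : Measure Ω} [IsProbabilityMeasure μ] {X : ℕ → Ω → ℝ} {p : ℝ}
    (hX : IsBernoulliProcess μ X p) (hp : 0 < p) {β c : ℝ} (hβ : 0 < β) (hc : 0 ≤ c)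
    {N : Ω → ℕ} (hN : ∀ ω, N ω = firstPassage (X · ω) c) :
    μ.real {ω | β ≤ |(∑ i ∈ range (N ω), X i ω) / N ω - p| / p}
      ≤ 2 * exp (-(c * chernoffRate β / (1 + β))) := by
  set s : ℝ := ⌊c⌋₊ + 1 with hs_def
  have hs : 0 < s := by positivity
  set A := {ω | s ≤ ∑ i ∈ range ⌊s / ((1 + β) * p)⌋₊, X i ω}
  set B := {ω | β < 1 ∧ ∑ i ∈ range (⌈s / ((1 - β) * p)⌉₊ - 1), X i ω ≤ s - 1}
  set Z := {ω | ¬ ((∀ i, X i ω = 0 ∨ X i ω = 1) ∧ ∃ n, c < ∑ i ∈ range n, X i ω)}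
  have hcover : {ω | β ≤ |(∑ i ∈ range (N ω), X i ω) / N ω - p| / p} ⊆ A ∪ B ∪ Z := by
    intro ω (hfail : β ≤ _)
    by_cases hgood : (∀ i, X i ω = 0 ∨ X i ω = 1) ∧ ∃ n, c < ∑ i ∈ range n, X i ω
    swap
    · exact Or.inr hgood
    obtain ⟨hx, hreach⟩ := hgood
    have hNpos := hN ω ▸ firstPassage_pos hx hc hreach
    rw [hN ω, sum_range_firstPassage hx hc hreach, ← hs_def, ← hN ω, le_div_iff₀ hp] at hfail
    rcases le_floor_or_ceil_le_of_le_abs_sub hs hp hβ.le hNpos hfail with hle | ⟨hβ1, hge⟩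
    · exact Or.inl (Or.inl ((lt_sum_range_iff_floor_add_one_le hx hc _).1
        ((firstPassage_le_iff hx hc hreach _).1 (hN ω ▸ hle))))
    · refine Or.inl (Or.inr ⟨hβ1, ?_⟩)
      have := sum_range_le_floor_of_lt_firstPassage hx hc hreach
        (n := ⌈s / ((1 - β) * p)⌉₊ - 1) (by rw [← hN ω]; omega)
      linarith
  have hZ : μ.real Z = 0 := (measureReal_eq_zero_iff).2
    (ae_iff.1 (hX.ae_eq_zero_or_eq_one.and (hX.ae_exists_lt_sum hp c)))
  have hA : μ.real A ≤ exp (-(s * chernoffRate β / (1 + β))) := by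
    refine hX.measureReal_le_sum_le_exp_chernoffRate hβ.le ?_
    have := Nat.floor_le (div_pos hs (by positivity : 0 < (1 + β) * p)).le
    rw [le_div_iff₀ (by positivity)] at this
    linarith
  have hB : μ.real B ≤ exp (-(s * chernoffRate β / (1 + β))) := by
    by_cases hβ1 : β < 1
    · simp only [B, hβ1, true_and]
      refine hX.measureReal_sum_le_sub_one_le_exp_chernoffRate hβ.le hβ1 hs.le ?_
      have hpos : 0 < s / ((1 - β) * p) := div_pos hs (mul_pos (by linarith) hp)
      have := Nat.le_ceil (s / ((1 - β) * p))
      rw [div_le_iff₀ (mul_pos (by linarith) hp)] at this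
      rw [Nat.cast_sub (Nat.one_le_iff_ne_zero.2 (Nat.ceil_pos.2 hpos).ne'), Nat.cast_one,
        sub_add_cancel]
      linarith
    · simp only [B, hβ1, false_and, Set.ofPred_false, measureReal_empty]
      positivity
  have hsc : exp (-(s * chernoffRate β / (1 + β))) ≤ exp (-(c * chernoffRate β / (1 + β))) := by
    have := (chernoffRate_pos hβ).le
    gcongr
    exact (Nat.lt_floor_add_one c).le
  calc μ.real {ω | β ≤ |(∑ i ∈ range (N ω), X i ω) / N ω - p| / p}
      ≤ μ.real A + μ.real B + μ.real Z :=
        (measureReal_mono hcover).trans ((measureReal_union_le _ _).trans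
          (by gcongr; exact measureReal_union_le _ _))
    _ ≤ 2 * exp (-(c * chernoffRate β / (1 + β))) := by linarith

theorem inverse_binomial_sampling {Ω : Type*} [MeasurableSpace Ω]
    (μ : Measure Ω) [IsProbabilityMeasure μ]
    (X : ℕ → Ω → ℝ) (p : ℝ) (hp0 : 0 < p) (hp1 : p < 1)
    (hmeas : ∀ i, Measurable (X i))
    (hindep : iIndepFun X μ)
    (hone : ∀ i, μ {ω | X i ω = 1} = ENNReal.ofReal p)
    (hzero : ∀ i, μ {ω | X i ω = 0} = ENNReal.ofReal (1 - p))
    (δ β : ℝ) (hδ0 : 0 < δ) (hδ1 : δ < 1) (hβ : 0 < β)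
    (N : Ω → ℕ)
    (hN : ∀ ω, N ω = sInf {n : ℕ | 0 < n ∧
      (∑ i ∈ Finset.range n, X i ω) >
        (1 + β) * Real.log (2 / δ) / ((1 + β) * Real.log (1 + β) - β)}) :
    (μ {ω | |(∑ i ∈ Finset.range (N ω), X i ω) / (N ω) - p| / p < β}).toReal
      ≥ 1 - δ := by
  have hX : IsBernoulliProcess μ X p := ⟨hp0.le, hp1.le, hmeas, hindep, hone, hzero⟩
  have hrate := chernoffRate_pos hβ
  have hlog : 0 < log (2 / δ) := log_pos (by rw [lt_div_iff₀ hδ0]; linarith)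
  have hfail := hX.measureReal_le_relError_firstPassage_le hp0 hβ
    (div_pos (by positivity) hrate).le hN
  have hexponent : (1 + β) * log (2 / δ) / chernoffRate β * chernoffRate β / (1 + β)
      = log (2 / δ) := by
    field_simp
  rw [hexponent, exp_neg, exp_log (by positivity), inv_div, mul_div_cancel₀ _ two_ne_zero]
    at hfail
  change μ.real _ ≥ 1 - δ
  linarith [one_sub_measureReal_le_measureReal_setOf_lt (μ := μ)
    (fun ω => |(∑ i ∈ range (N ω), X i ω) / (N ω) - p| / p) β]
end
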